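/- (Lemma 3, energy maximization.) Let (β,Θ) be an optimal policy for the energy maximization problem. Suppose that for some epoch i ∈ {1,...,I−1} and sub-channel k, β_{i,k} > 0, Θ_{i,k} > 0, β_{i+1,k} > 0, Θ_{i+1,k} > 0, and set p_{j,k} = (e^{2β_{j,k}/Θ_{j,k}} − 1)/γ_{j,k} for j = i, i+1. If the glue level increases, i.e., 1/γ_{i,k} + p_{i,k} < 1/γ_{i+1,k} + p_{i+1,k}, then at the end of epoch i either the battery is empty, Σ_{j=1}^{i} Σ_{k'=1}^{K} c_{j,k'} = Σ_{j=1}^{i} E_j, or the data buffer is empty, Σ_{j=1}^{i} Σ_{k'=1}^{K} β_{j,k'} = Σ_{j=1}^{i} B_j. -/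

import Mathlib

private lemma exp_sub_one_le_mul (x : ℝ) : Real.exp x - 1 ≤ x * Real.exp x := by
  have h := Real.add_one_le_exp (-x)
  have hp := Real.exp_pos x
  have h2 : Real.exp (-x) * Real.exp x = 1 := by rw [← Real.exp_add]; simp
  nlinarith

private lemma exp_neg_sub_one_le (y : ℝ) : Real.exp (-y) - 1 ≤ -(y * Real.exp (-y)) := by
  have h := Real.add_one_le_exp y
  have hp := Real.exp_pos (-y)
  have h2 : Real.exp (-y) * Real.exp y = 1 := by rw [← Real.exp_add]; simp
  nlinarith

private lemma ind_sum (m K i k : ℕ) (hi : 1 ≤ i) (hk : k ∈ Finset.Icc 1 K) (d : ℝ) :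
    ∑ j ∈ Finset.Icc 1 m, ∑ k' ∈ Finset.Icc 1 K, (if j = i ∧ k' = k then d else 0)
      = if i ≤ m then d else 0 := by
  have h1 : ∀ j, (∑ k' ∈ Finset.Icc 1 K, (if j = i ∧ k' = k then d else 0))
      = if j = i then d else 0 := by
    intro j
    by_cases hj : j = i
    · simp only [hj, true_and, if_pos rfl]
      rw [Finset.sum_ite_eq' (Finset.Icc 1 K) k (fun _ => d)]
      simp [hk]
    · simp [hj]
  rw [Finset.sum_congr rfl (fun j _ => h1 j),
    Finset.sum_ite_eq' (Finset.Icc 1 m) i (fun _ => d)]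
  simp [Finset.mem_Icc, hi]

set_option maxHeartbeats 1000000



/-- Energy consumed in one epoch on one sub-channel with gain `γ`, processing cost `ε`,
duration `θ` and delivered data `β`: `(θ/γ)(e^{2β/θ} − 1) + θ ε`, taken to be `0`
when `θ = 0`. -/
noncomputable def EpochEnergy (γ ε θ β : ℝ) : ℝ :=
  if θ = 0 then 0 else θ / γ * (Real.exp (2 * β / θ) - 1) + θ * ε

/-- Feasibility of an energy-maximization policy `(β, Θ)` (data amounts and durations,
indexed by epoch `i ∈ {1,…,I}` and sub-channel `k ∈ {1,…,K}`): nonnegativity,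
`Θ i k ≤ τ i`, `β i k = 0` whenever `Θ i k = 0`, the energy causality constraints,
the data causality constraints, and delivery of all data by the deadline. -/
def EnergyFeasible (I K : ℕ) (τ : ℕ → ℝ) (γ : ℕ → ℕ → ℝ) (E B : ℕ → ℝ) (ε : ℝ)
    (β Θ : ℕ → ℕ → ℝ) : Prop :=
  (∀ i ∈ Finset.Icc 1 I, ∀ k ∈ Finset.Icc 1 K,
      0 ≤ β i k ∧ 0 ≤ Θ i k ∧ Θ i k ≤ τ i ∧ (Θ i k = 0 → β i k = 0)) ∧
  (∀ i ∈ Finset.Icc 1 I,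
      ∑ j ∈ Finset.Icc 1 i, ∑ k ∈ Finset.Icc 1 K, EpochEnergy (γ j k) ε (Θ j k) (β j k)
        ≤ ∑ j ∈ Finset.Icc 1 i, E j) ∧
  (∀ i ∈ Finset.Icc 1 (I - 1),
      ∑ j ∈ Finset.Icc 1 i, ∑ k ∈ Finset.Icc 1 K, β j k
        ≤ ∑ j ∈ Finset.Icc 1 i, B j) ∧
  (∑ j ∈ Finset.Icc 1 I, B j ≤ ∑ j ∈ Finset.Icc 1 I, ∑ k ∈ Finset.Icc 1 K, β j k)

/-- Total energy consumed by a policy `(β, Θ)`. -/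
noncomputable def TotalEnergy (I K : ℕ) (γ : ℕ → ℕ → ℝ) (ε : ℝ)
    (β Θ : ℕ → ℕ → ℝ) : ℝ :=
  ∑ i ∈ Finset.Icc 1 I, ∑ k ∈ Finset.Icc 1 K, EpochEnergy (γ i k) ε (Θ i k) (β i k)

/-- A policy is optimal for the energy maximization problem if it is feasible and
minimizes the total consumed energy (equivalently, maximizes the remaining energy)
among feasible policies. -/
def EnergyOptimal (I K : ℕ) (τ : ℕ → ℝ) (γ : ℕ → ℕ → ℝ) (E B : ℕ → ℝ) (ε : ℝ)
    (β Θ : ℕ → ℕ → ℝ) : Prop :=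
  EnergyFeasible I K τ γ E B ε β Θ ∧
  ∀ β' Θ' : ℕ → ℕ → ℝ, EnergyFeasible I K τ γ E B ε β' Θ' →
    TotalEnergy I K γ ε β Θ ≤ TotalEnergy I K γ ε β' Θ'

/-- Lemma 3 (energy maximization): if the glue level on some sub-channel increases from
epoch `i` to epoch `i+1`, then at the end of epoch `i` either the battery is empty or
the data buffer is empty. -/
theorem glue_level_increase_battery_or_buffer_empty (I K : ℕ) (hI : 1 ≤ I) (hK : 1 ≤ K)
    (τ : ℕ → ℝ) (hτ : ∀ i ∈ Finset.Icc 1 I, 0 < τ i)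
    (γ : ℕ → ℕ → ℝ) (hγ : ∀ i ∈ Finset.Icc 1 I, ∀ k ∈ Finset.Icc 1 K, 0 < γ i k)
    (E : ℕ → ℝ) (hE : ∀ i ∈ Finset.Icc 1 I, 0 ≤ E i)
    (B : ℕ → ℝ) (hB : ∀ i ∈ Finset.Icc 1 I, 0 ≤ B i)
    (ε : ℝ) (hε : 0 < ε)
    (β Θ : ℕ → ℕ → ℝ) (hopt : EnergyOptimal I K τ γ E B ε β Θ)
    (i k : ℕ) (hi1 : 1 ≤ i) (hiI : i < I) (hk : k ∈ Finset.Icc 1 K)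
    (hβ : 0 < β i k) (hΘ : 0 < Θ i k)
    (hβ' : 0 < β (i + 1) k) (hΘ' : 0 < Θ (i + 1) k)
    (hglue : 1 / γ i k + (Real.exp (2 * β i k / Θ i k) - 1) / γ i k
        < 1 / γ (i + 1) k + (Real.exp (2 * β (i + 1) k / Θ (i + 1) k) - 1) / γ (i + 1) k) :
    (∑ j ∈ Finset.Icc 1 i, ∑ k' ∈ Finset.Icc 1 K, EpochEnergy (γ j k') ε (Θ j k') (β j k')
        = ∑ j ∈ Finset.Icc 1 i, E j) ∨
    (∑ j ∈ Finset.Icc 1 i, ∑ k' ∈ Finset.Icc 1 K, β j k'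
        = ∑ j ∈ Finset.Icc 1 i, B j) := by
  classical
  by_contra hcon
  push_neg at hcon
  obtain ⟨hc1, hc2⟩ := hcon
  obtain ⟨⟨hnn, hcaus, hdata, hdel⟩, hmin⟩ := hopt
  have hmi : i ∈ Finset.Icc 1 I := by simp only [Finset.mem_Icc]; omega
  have hmi1 : i + 1 ∈ Finset.Icc 1 I := by simp only [Finset.mem_Icc]; omega
  have hmi' : i ∈ Finset.Icc 1 (I - 1) := by simp only [Finset.mem_Icc]; omega
  have hg1 : 0 < γ i k := hγ i hmi k hk
  have hg2 : 0 < γ (i + 1) k := hγ (i + 1) hmi1 k hk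
  have hθ1ne : Θ i k ≠ 0 := ne_of_gt hΘ
  have hθ2ne : Θ (i + 1) k ≠ 0 := ne_of_gt hΘ'
  -- glue levels
  set L := Real.exp (2 * β i k / Θ i k) / γ i k with hLdef
  set R := Real.exp (2 * β (i + 1) k / Θ (i + 1) k) / γ (i + 1) k with hRdef
  have hLpos : 0 < L := div_pos (Real.exp_pos _) hg1
  have hRpos : 0 < R := div_pos (Real.exp_pos _) hg2
  have hLR : L < R := by
    have e1 : 1 / γ i k + (Real.exp (2 * β i k / Θ i k) - 1) / γ i k = L := by
      rw [hLdef]; ring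
    have e2 : 1 / γ (i + 1) k + (Real.exp (2 * β (i + 1) k / Θ (i + 1) k) - 1)
        / γ (i + 1) k = R := by rw [hRdef]; ring
    linarith [hglue]
  set t := Real.log (R / L) / 4 with htdef
  have hRL1 : 1 < R / L := (one_lt_div hLpos).mpr hLR
  have htpos : 0 < t := by
    have := Real.log_pos hRL1
    rw [htdef]; linarith
  have hetpos : 0 < Real.exp t := Real.exp_pos t
  clear_value L R t
  -- slacks
  set cE := ∑ j ∈ Finset.Icc 1 i, ∑ k' ∈ Finset.Icc 1 K,
      EpochEnergy (γ j k') ε (Θ j k') (β j k') with hcEdef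
  set cB := ∑ j ∈ Finset.Icc 1 i, ∑ k' ∈ Finset.Icc 1 K, β j k' with hcBdef
  have hEi := hcaus i hmi
  rw [← hcEdef] at hEi
  have hBi := hdata i hmi'
  rw [← hcBdef] at hBi
  have hsE' : cE < ∑ j ∈ Finset.Icc 1 i, E j := lt_of_le_of_ne hEi hc1
  have hsB' : cB < ∑ j ∈ Finset.Icc 1 i, B j := lt_of_le_of_ne hBi hc2
  set sE := (∑ j ∈ Finset.Icc 1 i, E j) - cE with hsEdef
  set sB := (∑ j ∈ Finset.Icc 1 i, B j) - cB with hsBdef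
  have hsEpos : 0 < sE := by rw [hsEdef]; linarith
  have hsBpos : 0 < sB := by rw [hsBdef]; linarith
  -- choice of δ
  have h2Le : 0 < 2 * L * Real.exp t := by positivity
  set δ := min (min (min (sE / (2 * L * Real.exp t)) sB) (β (i + 1) k))
      (min (t * Θ i k / 2) (t * Θ (i + 1) k / 2)) with hδdef
  have hδpos : 0 < δ := by
    refine lt_min (lt_min (lt_min ?_ hsBpos) hβ') (lt_min ?_ ?_)
    · exact div_pos hsEpos h2Le
    · positivity
    · positivity
  have hδE : δ ≤ sE / (2 * L * Real.exp t) :=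
    le_trans (min_le_left _ _) (le_trans (min_le_left _ _) (min_le_left _ _)) |>.trans
      (le_refl _)
  have hδB : δ ≤ sB :=
    le_trans (min_le_left _ _) (le_trans (min_le_left _ _) (min_le_right _ _))
  have hδb2 : δ ≤ β (i + 1) k := le_trans (min_le_left _ _) (min_le_right _ _)
  have hδt1 : δ ≤ t * Θ i k / 2 := le_trans (min_le_right _ _) (min_le_left _ _)
  have hδt2 : δ ≤ t * Θ (i + 1) k / 2 := le_trans (min_le_right _ _) (min_le_right _ _)
  have hx1 : 2 * δ / Θ i k ≤ t := by
    rw [div_le_iff₀ hΘ]; linarith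
  have hx2 : 2 * δ / Θ (i + 1) k ≤ t := by
    rw [div_le_iff₀ hΘ']; linarith
  clear_value cE cB sE sB δ
  -- the perturbed policy
  set bb : ℕ → ℕ → ℝ := fun j k' =>
    if j = i ∧ k' = k then β i k + δ
    else if j = i + 1 ∧ k' = k then β (i + 1) k - δ
    else β j k' with hbbdef
  set Δ1 := EpochEnergy (γ i k) ε (Θ i k) (β i k + δ)
      - EpochEnergy (γ i k) ε (Θ i k) (β i k) with hΔ1def
  set Δ2 := EpochEnergy (γ (i + 1) k) ε (Θ (i + 1) k) (β (i + 1) k - δ)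
      - EpochEnergy (γ (i + 1) k) ε (Θ (i + 1) k) (β (i + 1) k) with hΔ2def
  clear_value bb Δ1 Δ2
  -- energy increments
  have hΔ1eq : Δ1 = Θ i k * L * (Real.exp (2 * δ / Θ i k) - 1) := by
    rw [hΔ1def, hLdef]
    simp only [EpochEnergy, if_neg hθ1ne]
    have hsplit : 2 * (β i k + δ) / Θ i k = 2 * β i k / Θ i k + 2 * δ / Θ i k := by
      field_simp
    rw [hsplit, Real.exp_add]; ring
  have hΔ2eq : Δ2 = Θ (i + 1) k * R * (Real.exp (-(2 * δ / Θ (i + 1) k)) - 1) := by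
    rw [hΔ2def, hRdef]
    simp only [EpochEnergy, if_neg hθ2ne]
    have hsplit : 2 * (β (i + 1) k - δ) / Θ (i + 1) k
        = 2 * β (i + 1) k / Θ (i + 1) k + -(2 * δ / Θ (i + 1) k) := by
      field_simp; ring
    rw [hsplit, Real.exp_add]; ring
  have hΔ1le : Δ1 ≤ 2 * δ * L * Real.exp t := by
    rw [hΔ1eq]
    have h1 : Real.exp (2 * δ / Θ i k) - 1
        ≤ (2 * δ / Θ i k) * Real.exp (2 * δ / Θ i k) := exp_sub_one_le_mul _
    have h2 : Real.exp (2 * δ / Θ i k) ≤ Real.exp t := Real.exp_le_exp.mpr hx1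
    calc Θ i k * L * (Real.exp (2 * δ / Θ i k) - 1)
        ≤ Θ i k * L * ((2 * δ / Θ i k) * Real.exp (2 * δ / Θ i k)) :=
          mul_le_mul_of_nonneg_left h1 (by positivity)
      _ = 2 * δ * L * Real.exp (2 * δ / Θ i k) := by field_simp
      _ ≤ 2 * δ * L * Real.exp t := by
          have h3 : 0 ≤ 2 * δ * L := by positivity
          nlinarith
  have hΔ2le : Δ2 ≤ -(2 * δ * R * Real.exp (-t)) := by
    rw [hΔ2eq]
    have h1 : Real.exp (-(2 * δ / Θ (i + 1) k)) - 1
        ≤ -((2 * δ / Θ (i + 1) k) * Real.exp (-(2 * δ / Θ (i + 1) k))) :=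
      exp_neg_sub_one_le _
    have h2 : Real.exp (-t) ≤ Real.exp (-(2 * δ / Θ (i + 1) k)) :=
      Real.exp_le_exp.mpr (by linarith)
    calc Θ (i + 1) k * R * (Real.exp (-(2 * δ / Θ (i + 1) k)) - 1)
        ≤ Θ (i + 1) k * R * (-((2 * δ / Θ (i + 1) k)
            * Real.exp (-(2 * δ / Θ (i + 1) k)))) :=
          mul_le_mul_of_nonneg_left h1 (by positivity)
      _ = -(2 * δ * R * Real.exp (-(2 * δ / Θ (i + 1) k))) := by field_simp
      _ ≤ -(2 * δ * R * Real.exp (-t)) := by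
          have h3 : 0 ≤ 2 * δ * R := by positivity
          nlinarith
  have hkey : L * Real.exp t < R * Real.exp (-t) := by
    have h2t : Real.exp (2 * t) < R / L := by
      rw [← Real.exp_log (show (0:ℝ) < R / L by positivity)]
      apply Real.exp_lt_exp.mpr
      have hlog : 0 < Real.log (R / L) := Real.log_pos hRL1
      rw [htdef]; linarith
    have hee : Real.exp t * Real.exp t = Real.exp (2 * t) := by
      rw [← Real.exp_add]; ring_nf
    have h3 : L * Real.exp t * Real.exp t < R := by
      rw [mul_assoc, hee]
      have := (lt_div_iff₀ hLpos).mp h2t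
      linarith
    have h5 : L * Real.exp t < R / Real.exp t := (lt_div_iff₀ hetpos).mpr h3
    rw [Real.exp_neg]
    rw [div_eq_mul_inv] at h5
    exact h5
  have hsumneg : Δ1 + Δ2 < 0 := by
    have h6 : 2 * δ * L * Real.exp t < 2 * δ * R * Real.exp (-t) := by
      have h2δ : 0 < 2 * δ := by linarith
      have := mul_lt_mul_of_pos_left hkey h2δ
      nlinarith
    linarith
  have hΔ1sE : Δ1 ≤ sE := by
    have := (le_div_iff₀ h2Le).mp hδE
    nlinarith
  -- pointwise descriptions
  have hne : i ≠ i + 1 := by omega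
  have hBpt : ∀ j k', bb j k' = β j k' + (if j = i ∧ k' = k then δ else 0)
      + (if j = i + 1 ∧ k' = k then -δ else 0) := by
    intro j k'
    by_cases h1 : j = i ∧ k' = k
    · have h2 : ¬(j = i + 1 ∧ k' = k) := by
        rintro ⟨h, _⟩; omega
      obtain ⟨h1a, h1b⟩ := h1
      simp only [hbbdef]
      rw [if_pos ⟨h1a, h1b⟩, if_pos ⟨h1a, h1b⟩, if_neg h2, h1a, h1b]; ring
    · by_cases h2 : j = i + 1 ∧ k' = k
      · obtain ⟨h2a, h2b⟩ := h2
        simp only [hbbdef]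
        rw [if_neg h1, if_pos ⟨h2a, h2b⟩, if_neg h1, if_pos ⟨h2a, h2b⟩, h2a, h2b]; ring
      · simp only [hbbdef]
        rw [if_neg h1, if_neg h2, if_neg h1, if_neg h2]; ring
  have hEpt : ∀ j k', EpochEnergy (γ j k') ε (Θ j k') (bb j k')
      = EpochEnergy (γ j k') ε (Θ j k') (β j k')
        + (if j = i ∧ k' = k then Δ1 else 0)
        + (if j = i + 1 ∧ k' = k then Δ2 else 0) := by
    intro j k'
    by_cases h1 : j = i ∧ k' = k
    · have h2 : ¬(j = i + 1 ∧ k' = k) := by rintro ⟨h, _⟩; omega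
      obtain ⟨h1a, h1b⟩ := h1
      simp only [hbbdef]
      rw [if_pos ⟨h1a, h1b⟩, if_pos ⟨h1a, h1b⟩, if_neg h2, h1a, h1b, hΔ1def]; ring
    · by_cases h2 : j = i + 1 ∧ k' = k
      · obtain ⟨h2a, h2b⟩ := h2
        simp only [hbbdef]
        rw [if_neg h1, if_pos ⟨h2a, h2b⟩, if_neg h1, if_pos ⟨h2a, h2b⟩, h2a, h2b,
          hΔ2def]; ring
      · simp only [hbbdef]
        rw [if_neg h1, if_neg h2, if_neg h1, if_neg h2]; ring
  -- cumulative sums of the perturbed policy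
  have hEsum : ∀ m, ∑ j ∈ Finset.Icc 1 m, ∑ k' ∈ Finset.Icc 1 K,
        EpochEnergy (γ j k') ε (Θ j k') (bb j k')
      = (∑ j ∈ Finset.Icc 1 m, ∑ k' ∈ Finset.Icc 1 K,
          EpochEnergy (γ j k') ε (Θ j k') (β j k'))
        + (if i ≤ m then Δ1 else 0) + (if i + 1 ≤ m then Δ2 else 0) := by
    intro m
    rw [← ind_sum m K i k hi1 hk Δ1, ← ind_sum m K (i + 1) k (by omega) hk Δ2,
      ← Finset.sum_add_distrib, ← Finset.sum_add_distrib]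
    refine Finset.sum_congr rfl fun j _ => ?_
    rw [← Finset.sum_add_distrib, ← Finset.sum_add_distrib]
    exact Finset.sum_congr rfl fun k' _ => hEpt j k'
  have hBsum : ∀ m, ∑ j ∈ Finset.Icc 1 m, ∑ k' ∈ Finset.Icc 1 K, bb j k'
      = (∑ j ∈ Finset.Icc 1 m, ∑ k' ∈ Finset.Icc 1 K, β j k')
        + (if i ≤ m then δ else 0) + (if i + 1 ≤ m then -δ else 0) := by
    intro m
    rw [← ind_sum m K i k hi1 hk δ, ← ind_sum m K (i + 1) k (by omega) hk (-δ),
      ← Finset.sum_add_distrib, ← Finset.sum_add_distrib]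
    refine Finset.sum_congr rfl fun j _ => ?_
    rw [← Finset.sum_add_distrib, ← Finset.sum_add_distrib]
    exact Finset.sum_congr rfl fun k' _ => hBpt j k'
  -- feasibility of the perturbed policy
  have hfeas' : EnergyFeasible I K τ γ E B ε bb Θ := by
    refine ⟨?_, ?_, ?_, ?_⟩
    · intro j hj k' hk'
      obtain ⟨hb0, hth0, hthτ, himp⟩ := hnn j hj k' hk'
      by_cases h1 : j = i ∧ k' = k
      · obtain ⟨h1a, h1b⟩ := h1
        refine ⟨?_, hth0, hthτ, ?_⟩
        · simp only [hbbdef]; rw [if_pos ⟨h1a, h1b⟩]; linarith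
        · intro hz; exfalso; rw [h1a, h1b] at hz; exact hθ1ne hz
      · by_cases h2 : j = i + 1 ∧ k' = k
        · obtain ⟨h2a, h2b⟩ := h2
          refine ⟨?_, hth0, hthτ, ?_⟩
          · simp only [hbbdef]; rw [if_neg h1, if_pos ⟨h2a, h2b⟩]; linarith
          · intro hz; exfalso; rw [h2a, h2b] at hz; exact hθ2ne hz
        · simp only [hbbdef]; rw [if_neg h1, if_neg h2]
          exact ⟨hb0, hth0, hthτ, himp⟩
    · intro m hm
      rw [hEsum m]
      by_cases hm1 : i + 1 ≤ m
      · have hm2 : i ≤ m := by omega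
        rw [if_pos hm2, if_pos hm1]
        have := hcaus m hm
        linarith
      · by_cases hm2 : i ≤ m
        · have hmeq : m = i := by omega
          subst hmeq
          rw [if_pos hm2, if_neg hm1]
          rw [← hcEdef]
          rw [hsEdef] at hΔ1sE
          linarith
        · rw [if_neg hm1, if_neg hm2]
          have := hcaus m hm
          linarith
    · intro m hm
      rw [hBsum m]
      by_cases hm1 : i + 1 ≤ m
      · have hm2 : i ≤ m := by omega
        rw [if_pos hm2, if_pos hm1]
        have := hdata m hm
        linarith
      · by_cases hm2 : i ≤ m
        · have hmeq : m = i := by omega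
          subst hmeq
          rw [if_pos hm2, if_neg hm1]
          rw [← hcBdef]
          rw [hsBdef] at hδB
          linarith
        · rw [if_neg hm1, if_neg hm2]
          have := hdata m hm
          linarith
    · rw [hBsum I]
      have hm2 : i ≤ I := by omega
      have hm1 : i + 1 ≤ I := by omega
      rw [if_pos hm2, if_pos hm1]
      have := hdel
      linarith
  -- contradiction with optimality
  have hTb : TotalEnergy I K γ ε bb Θ
      = TotalEnergy I K γ ε β Θ + Δ1 + Δ2 := by
    have h1 : TotalEnergy I K γ ε bb Θ = ∑ j ∈ Finset.Icc 1 I, ∑ k' ∈ Finset.Icc 1 K,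
        EpochEnergy (γ j k') ε (Θ j k') (bb j k') := rfl
    have h2 : TotalEnergy I K γ ε β Θ = ∑ j ∈ Finset.Icc 1 I, ∑ k' ∈ Finset.Icc 1 K,
        EpochEnergy (γ j k') ε (Θ j k') (β j k') := rfl
    rw [h1, h2, hEsum I, if_pos (show i ≤ I by omega),
      if_pos (show i + 1 ≤ I by omega)]
  have hle := hmin bb Θ hfeas'
  rw [hTb] at hle
  linarith
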